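/- For every β ∈ B, Y_β^ss = S_β ∩ W_β; in particular S_β = O(n).Y_β^ss. -/

import Mathlib

open scoped BigOperators
open Matrix

noncomputable section

/-- An element of `V_n`, i.e. a bilinear map ℝⁿ×ℝⁿ→ℝⁿ, encoded by its structure
constants `μ i j k = ⟨μ(e_i,e_j), e_k⟩`. -/
abbrev Vn (n : ℕ) : Type := Fin n → Fin n → Fin n → ℝ

variable {n : ℕ}

/-- skew-symmetry, i.e. membership in `V_n` = Λ²(ℝⁿ)*⊗ℝⁿ. -/
def IsSkew (μ : Vn n) : Prop := ∀ i j k, μ i j k = - μ j i k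

/-- The bilinear map μ : ℝⁿ×ℝⁿ→ℝⁿ associated to the structure constants. -/
def brkt (μ : Vn n) (x y : Fin n → ℝ) : Fin n → ℝ := fun k => ∑ i, ∑ j, x i * y j * μ i j k

/-- The inner product ⟨α,β⟩ = tr(αβᵀ) on n×n matrices. -/
def innM (α β : Matrix (Fin n) (Fin n) ℝ) : ℝ := (α * βᵀ).trace

/-- ‖β‖² for the trace inner product. -/
def normsqM (β : Matrix (Fin n) (Fin n) ℝ) : ℝ := innM β β

/-- ‖β‖ for the trace inner product. -/
def normM (β : Matrix (Fin n) (Fin n) ℝ) : ℝ := Real.sqrt (normsqM β)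

/-- The inner product on V_n: ⟨μ,λ⟩ = Σ_{ijk} μ_{ij}^k λ_{ij}^k. -/
def innV (μ lam : Vn n) : ℝ := ∑ i, ∑ j, ∑ k, μ i j k * lam i j k

/-- The weight α_{ij}^k = E_kk − E_ii − E_jj. -/
def wt (i j k : Fin n) : Matrix (Fin n) (Fin n) ℝ :=
  Matrix.single k k 1 - Matrix.single i i 1 - Matrix.single j j 1

/-- The GL(n,ℝ)-action on V_n: (g.μ)(X,Y) = g μ(g⁻¹X, g⁻¹Y), in structure constants. -/
def act (g : GL (Fin n) ℝ) (μ : Vn n) : Vn n := fun i j k =>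
  ∑ p, ∑ q, ∑ r, (↑g⁻¹ : Matrix (Fin n) (Fin n) ℝ) p i *
    (↑g⁻¹ : Matrix (Fin n) (Fin n) ℝ) q j * (↑g : Matrix (Fin n) (Fin n) ℝ) k r * μ p q r

/-- The infinitesimal action π(α)μ = αμ(·,·) − μ(α·,·) − μ(·,α·), as an endomorphism of V_n. -/
def piEnd (α : Matrix (Fin n) (Fin n) ℝ) : Module.End ℝ (Vn n) where
  toFun μ := fun i j k =>
    (∑ r, α k r * μ i j r) - (∑ p, α p i * μ p j k) - (∑ q, α q j * μ i q k)
  map_add' μ ν := by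
    funext i j k
    simp [mul_add, Finset.sum_add_distrib]
    ring
  map_smul' a μ := by
    funext i j k
    simp only [Pi.smul_apply, smul_eq_mul, RingHom.id_apply, Finset.mul_sum, mul_sub]
    simp [mul_comm, mul_left_comm]


/-- conjugation gαg⁻¹ of a matrix by an element of GL. -/
def mconj (g : GL (Fin n) ℝ) (α : Matrix (Fin n) (Fin n) ℝ) : Matrix (Fin n) (Fin n) ℝ :=
  (↑g : Matrix (Fin n) (Fin n) ℝ) * α * (↑g⁻¹ : Matrix (Fin n) (Fin n) ℝ)

/-- The set D of diagonalizable matrices, D = ∪_{g∈G} g 𝔱 g⁻¹. -/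
def DiagSet : Set (Matrix (Fin n) (Fin n) ℝ) :=
  {α | ∃ g : GL (Fin n) ℝ, ∃ δ : Matrix (Fin n) (Fin n) ℝ, δ.IsDiag ∧
    α = mconj g δ}

/-- m(μ,α): the smallest eigenvalue of π(α) such that the projection of μ onto the
corresponding eigenspace is nonzero (for diagonalizable α, the projection onto the
eigenspace of r is nonzero iff μ is not in the sum of the other eigenspaces). -/
def mFun (μ : Vn n) (α : Matrix (Fin n) (Fin n) ℝ) : ℝ :=
  sInf {r : ℝ | μ ∉ ⨆ (a : ℝ) (_ : a ≠ r), Module.End.eigenspace (piEnd α) a}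

/-- q(α) = tr(α²). -/
def qF (α : Matrix (Fin n) (Fin n) ℝ) : ℝ := (α * α).trace

/-- Q(μ) = inf{q(α) : α ∈ D, m(μ,α) ≥ 1}. -/
def QF (μ : Vn n) : ℝ := sInf {x : ℝ | ∃ α ∈ DiagSet (n := n), 1 ≤ mFun μ α ∧ x = qF α}

/-- Λ(μ) = {β ∈ D : q(β) = Q(μ), m(μ,β) ≥ 1}. -/
def LambdaF (μ : Vn n) : Set (Matrix (Fin n) (Fin n) ℝ) :=
  {β | β ∈ DiagSet (n := n) ∧ qF β = QF μ ∧ 1 ≤ mFun μ β}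

/-- m(μ,α) for diagonal α: min{⟨α,α_ij^k⟩ : μ_ij^k ≠ 0}. -/
def mT (μ : Vn n) (α : Matrix (Fin n) (Fin n) ℝ) : ℝ :=
  sInf {x : ℝ | ∃ i j k, μ i j k ≠ 0 ∧ x = innM α (wt i j k)}

/-- Q_T(μ) = inf{‖α‖² : α ∈ 𝔱, m(μ,α) ≥ 1}. -/
def QT (μ : Vn n) : ℝ :=
  sInf {x : ℝ | ∃ α : Matrix (Fin n) (Fin n) ℝ, α.IsDiag ∧ 1 ≤ mT μ α ∧ x = normsqM α}

/-- Λ_T(μ) = {β ∈ 𝔱 : ‖β‖² = Q_T(μ), m(μ,β) ≥ 1}. -/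
def LambdaT (μ : Vn n) : Set (Matrix (Fin n) (Fin n) ℝ) :=
  {β | β.IsDiag ∧ normsqM β = QT μ ∧ 1 ≤ mT μ β}

/-- The set of weights {α_ij^k : μ_ij^k ≠ 0}. -/
def wtSet (μ : Vn n) : Set (Matrix (Fin n) (Fin n) ℝ) :=
  {w | ∃ i j k, μ i j k ≠ 0 ∧ w = wt i j k}

/-- β_μ: the minimal convex combination of {α_ij^k : μ_ij^k ≠ 0}, i.e. the unique vector of
minimal norm in the convex hull of this set. -/
def betaMu (μ : Vn n) : Matrix (Fin n) (Fin n) ℝ :=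
  Classical.epsilon fun β => β ∈ convexHull ℝ (wtSet μ) ∧
    ∀ γ ∈ convexHull ℝ (wtSet μ), normsqM β ≤ normsqM γ

/-- The stratum S_β = {μ ∈ V_n∖{0} : β is an element of maximal norm in {β_{g.μ} : g ∈ G}}. -/
def SS (β : Matrix (Fin n) (Fin n) ℝ) : Set (Vn n) :=
  {μ | μ ≠ 0 ∧ IsSkew μ ∧ (∃ g : GL (Fin n) ℝ, betaMu (act g μ) = β) ∧
    ∀ g : GL (Fin n) ℝ, normM (betaMu (act g μ)) ≤ normM β}

/-- W_β = {μ ∈ V_n : ⟨β,α_ij^k⟩ ≥ ‖β‖² whenever μ_ij^k ≠ 0}. -/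
def Wset (β : Matrix (Fin n) (Fin n) ℝ) : Set (Vn n) :=
  {μ | IsSkew μ ∧ ∀ i j k, μ i j k ≠ 0 → normsqM β ≤ innM β (wt i j k)}

/-- Z_β = {μ ∈ V_n : ⟨β,α_ij^k⟩ = ‖β‖² whenever μ_ij^k ≠ 0}. -/
def Zset (β : Matrix (Fin n) (Fin n) ℝ) : Set (Vn n) :=
  {μ | IsSkew μ ∧ ∀ i j k, μ i j k ≠ 0 → innM β (wt i j k) = normsqM β}

/-- Y_β = {μ ∈ W_β : ⟨β,α_ij^k⟩ = ‖β‖² for at least one μ_ij^k ≠ 0}. -/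
def Yset (β : Matrix (Fin n) (Fin n) ℝ) : Set (Vn n) :=
  {μ | μ ∈ Wset β ∧ ∃ i j k, μ i j k ≠ 0 ∧ innM β (wt i j k) = normsqM β}

/-- The closed Weyl chamber: diagonal matrices with nondecreasing diagonal entries. -/
def upperT : Set (Matrix (Fin n) (Fin n) ℝ) :=
  {α | α.IsDiag ∧ Monotone fun i => α i i}

/-- B = {β ∈ closure(𝔱⁺) : S_β ≠ ∅}. -/
def Bset : Set (Matrix (Fin n) (Fin n) ℝ) := {β | β ∈ upperT (n := n) ∧ (SS β).Nonempty}

/-- Der(μ) = {α : π(α)μ = 0}. -/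
def Der (μ : Vn n) : Set (Matrix (Fin n) (Fin n) ℝ) := {α | piEnd α μ = 0}

/-- The subgroup of lower triangular invertible matrices. -/
def lowerTriGL : Set (GL (Fin n) ℝ) :=
  {g | ∀ i j : Fin n, i < j → (↑g : Matrix (Fin n) (Fin n) ℝ) i j = 0}

/-- The parabolic subgroup P_α = B₀ G_α attached to α ∈ closure(𝔱⁺). -/
def Pgroup (α : Matrix (Fin n) (Fin n) ℝ) : Set (GL (Fin n) ℝ) :=
  {p | ∃ b ∈ lowerTriGL (n := n), ∃ h : GL (Fin n) ℝ,
    mconj h α = α ∧ p = b * h}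

/-- The parabolic subgroup P_{α'} = g P_α g⁻¹ attached to a diagonalizable matrix
α' = gαg⁻¹, α ∈ closure(𝔱⁺)  (this is independent of the chosen representation). -/
def PgroupD (α' : Matrix (Fin n) (Fin n) ℝ) : Set (GL (Fin n) ℝ) :=
  {p | ∃ g : GL (Fin n) ℝ, ∃ α ∈ upperT (n := n),
    α' = mconj g α ∧ p ∈ (fun h => g * h * g⁻¹) '' Pgroup α}

/-- membership in O(n). -/
def IsOrth (g : GL (Fin n) ℝ) : Prop := (↑g : Matrix (Fin n) (Fin n) ℝ)ᵀ * (↑g : Matrix (Fin n) (Fin n) ℝ) = 1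

/-- The orthogonal projection p_β : W_β → Z_β (in coordinates: it keeps exactly the
coefficients whose weight pairs to ‖β‖² with β). -/
def pproj (β : Matrix (Fin n) (Fin n) ℝ) (μ : Vn n) : Vn n :=
  fun i j k => if innM β (wt i j k) = normsqM β then μ i j k else 0

/-- H_β: the connected subgroup of G whose Lie algebra 𝔥_β is the orthogonal complement
of β inside 𝔤_β = {α : αβ = βα}, realized as the subgroup generated by exponentials. -/
def Hgrp (β : Matrix (Fin n) (Fin n) ℝ) : Subgroup (GL (Fin n) ℝ) :=
  Subgroup.closure {g | ∃ α : Matrix (Fin n) (Fin n) ℝ,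
    α * β = β * α ∧ innM α β = 0 ∧ (↑g : Matrix (Fin n) (Fin n) ℝ) = NormedSpace.exp α}

/-- μ is H_β-semistable if 0 is not in the closure of the orbit H_β.μ. -/
def Semistable (β : Matrix (Fin n) (Fin n) ℝ) (μ : Vn n) : Prop :=
  (0 : Vn n) ∉ closure ((fun g => act g μ) '' ((Hgrp β : Subgroup (GL (Fin n) ℝ)) : Set (GL (Fin n) ℝ)))

/-- The Jacobi identity for the bilinear map attached to μ. -/
def IsJacobi (μ : Vn n) : Prop :=
  ∀ x y z : Fin n → ℝ,
    brkt μ (brkt μ x y) z + brkt μ (brkt μ y z) x + brkt μ (brkt μ z x) y = 0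

/-- Iterated (left-normed) brackets ad x₁ ∘ … ∘ ad x_m (y). -/
def iterBr (μ : Vn n) : List (Fin n → ℝ) → (Fin n → ℝ) → (Fin n → ℝ)
  | [], y => y
  | x :: l, y => brkt μ x (iterBr μ l y)

/-- Nilpotency: some length of iterated brackets vanishes identically. -/
def IsNilp (μ : Vn n) : Prop :=
  ∃ m : ℕ, ∀ l : List (Fin n → ℝ), l.length = m → ∀ y, iterBr μ l y = 0

/-- N: the set of nilpotent Lie brackets in V_n. -/
def Nset : Set (Vn n) := {μ | IsSkew μ ∧ IsJacobi μ ∧ IsNilp μ}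


lemma innM_eq_sum (α β : Matrix (Fin n) (Fin n) ℝ) : innM α β = ∑ i, ∑ j, α i j * β i j := by
  simp [innM, Matrix.trace, Matrix.mul_apply, Matrix.diag, Matrix.transpose_apply]

lemma innM_wt (β : Matrix (Fin n) (Fin n) ℝ) (i j k : Fin n) :
    innM β (wt i j k) = β k k - β i i - β j j := by
  simp [innM_eq_sum, wt, Matrix.sub_apply, mul_sub, Finset.sum_sub_distrib,
    Matrix.single, Matrix.of_apply, Finset.sum_ite_eq, Finset.sum_ite_eq',
    and_comm, ite_and]

lemma act_one (μ : Vn n) : act 1 μ = μ := by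
  funext i j k
  simp [act, Matrix.one_apply]


lemma act_mul (g h : GL (Fin n) ℝ) (μ : Vn n) : act g (act h μ) = act (g * h) μ := by
  funext i j k
  simp only [act, _root_.mul_inv_rev, Units.val_mul, Matrix.mul_apply, Finset.sum_mul, Finset.mul_sum]
  conv_lhs => enter [2, p, 2, q]; rw [Finset.sum_comm]
  conv_lhs => enter [2, p]; rw [Finset.sum_comm]
  conv_lhs => rw [Finset.sum_comm]
  conv_lhs => enter [2, a, 2, p, 2, q]; rw [Finset.sum_comm]
  conv_lhs => enter [2, a, 2, p]; rw [Finset.sum_comm]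
  conv_lhs => enter [2, a]; rw [Finset.sum_comm]
  conv_lhs => enter [2, a, 2, b, 2, p, 2, q]; rw [Finset.sum_comm]
  conv_lhs => enter [2, a, 2, b, 2, p]; rw [Finset.sum_comm]
  conv_lhs => enter [2, a, 2, b]; rw [Finset.sum_comm]
  conv_rhs => enter [2, a, 2, b, 2, c]; rw [Finset.sum_comm]
  conv_rhs => enter [2, a, 2, b, 2, c, 2, q]; rw [Finset.sum_comm]
  conv_rhs => enter [2, a, 2, b, 2, c]; rw [Finset.sum_comm]
  refine Finset.sum_congr rfl fun a _ => ?_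
  refine Finset.sum_congr rfl fun b _ => ?_
  refine Finset.sum_congr rfl fun c _ => ?_
  refine Finset.sum_congr rfl fun p _ => ?_
  refine Finset.sum_congr rfl fun q _ => ?_
  refine Finset.sum_congr rfl fun r _ => ?_
  ring

lemma act_zero (g : GL (Fin n) ℝ) : act g (0 : Vn n) = 0 := by
  funext i j k; simp [act]

lemma act_ne_zero (g : GL (Fin n) ℝ) {μ : Vn n} (hμ : μ ≠ 0) : act g μ ≠ 0 := by
  intro h
  apply hμ
  have := congrArg (act g⁻¹) h
  rwa [act_mul, inv_mul_cancel, act_one, act_zero] at this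

lemma act_skew (g : GL (Fin n) ℝ) {μ : Vn n} (hμ : IsSkew μ) : IsSkew (act g μ) := by
  intro i j k
  unfold act
  rw [Finset.sum_comm, ← Finset.sum_neg_distrib]
  refine Finset.sum_congr rfl fun p _ => ?_
  rw [← Finset.sum_neg_distrib]
  refine Finset.sum_congr rfl fun q _ => ?_
  rw [← Finset.sum_neg_distrib]
  refine Finset.sum_congr rfl fun r _ => ?_
  rw [hμ p q r]
  ring

lemma SS_act (β : Matrix (Fin n) (Fin n) ℝ) {μ : Vn n} (hμ : μ ∈ SS β) (h : GL (Fin n) ℝ) :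
    act h μ ∈ SS β := by
  obtain ⟨hne, hskew, ⟨g₀, hg₀⟩, hmax⟩ := id hμ
  refine ⟨act_ne_zero h hne, act_skew h hskew, ⟨g₀ * h⁻¹, ?_⟩, fun g => ?_⟩
  · rw [act_mul, inv_mul_cancel_right]; exact hg₀
  · rw [act_mul]; exact hmax (g * h)

lemma innM_comm (α γ : Matrix (Fin n) (Fin n) ℝ) : innM α γ = innM γ α := by
  simp [innM_eq_sum, mul_comm]

lemma innM_add_right (α γ δ : Matrix (Fin n) (Fin n) ℝ) :
    innM α (γ + δ) = innM α γ + innM α δ := by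
  simp [innM_eq_sum, Matrix.add_apply, mul_add, Finset.sum_add_distrib]

lemma innM_smul_right (t : ℝ) (α γ : Matrix (Fin n) (Fin n) ℝ) :
    innM α (t • γ) = t * innM α γ := by
  simp [innM_eq_sum, Matrix.smul_apply, Finset.mul_sum, smul_eq_mul]
  exact Finset.sum_congr rfl fun i _ => Finset.sum_congr rfl fun j _ => by ring

lemma innM_sub_right (α γ δ : Matrix (Fin n) (Fin n) ℝ) :
    innM α (γ - δ) = innM α γ - innM α δ := by
  simp [innM_eq_sum, Matrix.sub_apply, mul_sub, Finset.sum_sub_distrib]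

lemma isLinearMap_innM (β : Matrix (Fin n) (Fin n) ℝ) :
    IsLinearMap ℝ (fun γ => innM β γ) :=
  ⟨fun γ δ => innM_add_right β γ δ, fun t γ => innM_smul_right t β γ⟩

lemma normsqM_nonneg (α : Matrix (Fin n) (Fin n) ℝ) : 0 ≤ normsqM α := by
  rw [normsqM, innM_eq_sum]
  exact Finset.sum_nonneg fun i _ => Finset.sum_nonneg fun j _ => mul_self_nonneg _

lemma innM_sq_le (α γ : Matrix (Fin n) (Fin n) ℝ) :
    innM α γ ^ 2 ≤ normsqM α * normsqM γ := by
  have h1 : innM α γ = ∑ x : Fin n × Fin n, α x.1 x.2 * γ x.1 x.2 := by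
    rw [innM_eq_sum, Fintype.sum_prod_type]
  have h2 : normsqM α = ∑ x : Fin n × Fin n, α x.1 x.2 ^ 2 := by
    rw [normsqM, innM_eq_sum, Fintype.sum_prod_type]
    simp [sq]
  have h3 : normsqM γ = ∑ x : Fin n × Fin n, γ x.1 x.2 ^ 2 := by
    rw [normsqM, innM_eq_sum, Fintype.sum_prod_type]
    simp [sq]
  rw [h1, h2, h3]
  exact Finset.sum_mul_sq_le_sq_mul_sq _ _ _

lemma normsqM_expand (b v : Matrix (Fin n) (Fin n) ℝ) (t : ℝ) :
    normsqM (b + t • v) = normsqM b + 2 * t * innM b v + t ^ 2 * normsqM v := by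
  have hc : ∀ x y : Matrix (Fin n) (Fin n) ℝ, innM (x + y) x = innM x x + innM x y := by
    intro x y
    rw [innM_comm, innM_add_right, innM_comm x x]
  rw [normsqM, innM_add_right]
  rw [innM_comm (b + t • v) b, innM_add_right, innM_comm (b + t • v) (t • v), innM_add_right]
  rw [innM_smul_right, innM_smul_right, innM_comm (t • v) b, innM_smul_right,
    innM_comm (t • v) v, innM_smul_right]
  rw [normsqM, normsqM]
  ring

lemma min_halfspace {C : Set (Matrix (Fin n) (Fin n) ℝ)} (hC : Convex ℝ C)
    {b : Matrix (Fin n) (Fin n) ℝ} (hb : b ∈ C)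
    (hmin : ∀ γ ∈ C, normsqM b ≤ normsqM γ) :
    ∀ x ∈ C, normsqM b ≤ innM b x := by
  intro x hx
  have key : ∀ t : ℝ, 0 < t → t ≤ 1 → 0 ≤ 2 * innM b (x - b) + t * normsqM (x - b) := by
    intro t ht ht1
    have hz : b + t • (x - b) ∈ C := by
      have := hC hb hx (by linarith : (0:ℝ) ≤ 1 - t) ht.le (by ring)
      convert this using 1
      rw [smul_sub]
      module
    have := hmin _ hz
    rw [normsqM_expand] at this
    nlinarith
  have hd : 0 ≤ innM b (x - b) := by
    by_contra hneg
    push_neg at hneg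
    set d := innM b (x - b) with hdd
    set s := normsqM (x - b) with hss
    have hs : 0 ≤ s := normsqM_nonneg _
    rcases eq_or_lt_of_le hs with hs0 | hs0
    · have := key 1 one_pos le_rfl
      rw [← hs0] at this
      linarith
    · have hts : 0 < min 1 (-d / s) := by
        apply lt_min one_pos
        apply div_pos (by linarith) hs0
      have := key _ hts (min_le_left _ _)
      have h2 : min 1 (-d / s) * s ≤ (-d / s) * s := by
        apply mul_le_mul_of_nonneg_right (min_le_right _ _) hs
      rw [div_mul_cancel₀] at h2
      · linarith
      · exact ne_of_gt hs0
  have := innM_sub_right b x b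
  rw [← normsqM] at this
  linarith [hd, this]

lemma wtSet_finite (μ : Vn n) : (wtSet μ).Finite := by
  apply Set.Finite.subset (Set.finite_range
    (fun t : Fin n × Fin n × Fin n => wt t.1 t.2.1 t.2.2))
  rintro w ⟨i, j, k, -, rfl⟩
  exact ⟨(i, j, k), rfl⟩

lemma wtSet_nonempty {μ : Vn n} (hμ : μ ≠ 0) : (wtSet μ).Nonempty := by
  have : ∃ i j k, μ i j k ≠ 0 := by
    by_contra h
    push_neg at h
    apply hμ
    funext i j k
    exact h i j k
  obtain ⟨i, j, k, h⟩ := this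
  exact ⟨wt i j k, i, j, k, h, rfl⟩

lemma continuous_normsqM : Continuous (fun γ : Matrix (Fin n) (Fin n) ℝ => normsqM γ) := by
  simp only [normsqM, innM_eq_sum]
  fun_prop

lemma betaMu_spec {μ : Vn n} (hμ : μ ≠ 0) :
    betaMu μ ∈ convexHull ℝ (wtSet μ) ∧
      ∀ γ ∈ convexHull ℝ (wtSet μ), normsqM (betaMu μ) ≤ normsqM γ := by
  apply Classical.epsilon_spec (p := fun β => β ∈ convexHull ℝ (wtSet μ) ∧
      ∀ γ ∈ convexHull ℝ (wtSet μ), normsqM β ≤ normsqM γ)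
  have hcpt : IsCompact (convexHull ℝ (wtSet μ)) := (wtSet_finite μ).isCompact_convexHull ℝ
  have hne : (convexHull ℝ (wtSet μ)).Nonempty := by
    rw [convexHull_nonempty_iff]
    exact wtSet_nonempty hμ
  obtain ⟨b, hb, hmin⟩ := hcpt.exists_isMinOn hne continuous_normsqM.continuousOn
  exact ⟨b, hb, fun γ hγ => hmin hγ⟩

lemma normM_lt_normM {a b : Matrix (Fin n) (Fin n) ℝ} (h : normsqM a < normsqM b) :
    normM a < normM b :=
  Real.sqrt_lt_sqrt (normsqM_nonneg a) h

/-- If `betaMu μ = β` (and μ ≠ 0) then all weights of μ pair at least `‖β‖²` with β. -/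
lemma W_of_betaMu {μ : Vn n} (hμ : μ ≠ 0) {β : Matrix (Fin n) (Fin n) ℝ}
    (hb : betaMu μ = β) : ∀ i j k, μ i j k ≠ 0 → normsqM β ≤ innM β (wt i j k) := by
  obtain ⟨hmem, hmin⟩ := betaMu_spec hμ
  rw [hb] at hmem hmin
  intro i j k hijk
  exact min_halfspace (convex_convexHull ℝ _) hmem hmin _
    (subset_convexHull ℝ _ ⟨i, j, k, hijk, rfl⟩)

/-- Part (1) hard direction: SS ∩ W ⊆ Y. -/
lemma mem_Y_of_SS_W {β : Matrix (Fin n) (Fin n) ℝ} {μ : Vn n}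
    (hSS : μ ∈ SS β) (hW : μ ∈ Wset β) : μ ∈ Yset β := by
  refine ⟨hW, ?_⟩
  by_contra hno
  push_neg at hno
  obtain ⟨hne, hskew, -, hmax⟩ := hSS
  -- all weights pair strictly above ‖β‖²
  have hstrict : wtSet μ ⊆ {x | normsqM β < innM β x} := by
    rintro w ⟨i, j, k, hijk, rfl⟩
    exact lt_of_le_of_ne (hW.2 i j k hijk) (fun h => hno i j k hijk h.symm)
  have hcvx : Convex ℝ {x : Matrix (Fin n) (Fin n) ℝ | normsqM β < innM β x} :=
    convex_halfSpace_gt (isLinearMap_innM β) _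
  obtain ⟨hmem, -⟩ := betaMu_spec hne
  have hγ : normsqM β < innM β (betaMu μ) := convexHull_min hstrict hcvx hmem
  have hcs := innM_sq_le β (betaMu μ)
  have h1 : normsqM β * normsqM β < normsqM β * normsqM (betaMu μ) := by
    nlinarith [normsqM_nonneg β]
  have hβpos : 0 < normsqM β := by
    rcases (normsqM_nonneg β).lt_or_eq with h | h
    · exact h
    · rw [← h] at h1; simpa using h1
  have h2 : normsqM β < normsqM (betaMu μ) := by
    exact lt_of_mul_lt_mul_left h1 hβpos.le
  have := hmax 1
  rw [act_one] at this
  exact absurd this (not_le_of_gt (normM_lt_normM h2))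

/-- Acting by a lower-triangular element preserves `Wset β` when the diagonal of β is
monotone. -/
lemma act_lower_W {β : Matrix (Fin n) (Fin n) ℝ} (hmono : Monotone fun i => β i i)
    (l : GL (Fin n) ℝ)
    (hl : ∀ i j : Fin n, i < j → (↑l : Matrix (Fin n) (Fin n) ℝ) i j = 0)
    (hli : ∀ i j : Fin n, i < j → (↑l⁻¹ : Matrix (Fin n) (Fin n) ℝ) i j = 0)
    {μ : Vn n} (hμ : μ ∈ Wset β) : act l μ ∈ Wset β := by
  refine ⟨act_skew l hμ.1, fun i j k hijk => ?_⟩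
  by_contra hlt
  push_neg at hlt
  apply hijk
  unfold act
  refine Finset.sum_eq_zero fun p _ => Finset.sum_eq_zero fun q _ =>
    Finset.sum_eq_zero fun r _ => ?_
  by_cases h1 : (↑l⁻¹ : Matrix (Fin n) (Fin n) ℝ) p i = 0
  · rw [h1]; ring
  by_cases h2 : (↑l⁻¹ : Matrix (Fin n) (Fin n) ℝ) q j = 0
  · rw [h2]; ring
  by_cases h3 : (↑l : Matrix (Fin n) (Fin n) ℝ) k r = 0
  · rw [h3]; ring
  by_cases h4 : μ p q r = 0
  · rw [h4]; ring
  exfalso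
  have hpi : i ≤ p := not_lt.mp fun h => h1 (hli p i h)
  have hqj : j ≤ q := not_lt.mp fun h => h2 (hli q j h)
  have hrk : r ≤ k := not_lt.mp fun h => h3 (hl k r h)
  have hw := hμ.2 p q r h4
  rw [innM_wt] at hw hlt
  have := hmono hpi
  have := hmono hqj
  have := hmono hrk
  simp only at *
  linarith

lemma posDef_mul_transpose_self {M : Matrix (Fin n) (Fin n) ℝ} (hM : IsUnit M.det) :
    (M * Mᵀ).PosDef := by
  rw [Matrix.posDef_iff_dotProduct_mulVec]
  constructor
  · unfold Matrix.IsHermitian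
    rw [Matrix.conjTranspose_eq_transpose_of_trivial, Matrix.transpose_mul,
      Matrix.transpose_transpose]
  · intro x hx
    have hy : Mᵀ *ᵥ x ≠ 0 := by
      intro h
      apply hx
      have := congrArg (fun v => (Mᵀ)⁻¹ *ᵥ v) h
      simpa [Matrix.mulVec_mulVec,
        Matrix.nonsing_inv_mul Mᵀ (Matrix.isUnit_det_transpose M hM)] using this
    have hexp : star x ⬝ᵥ (M * Mᵀ) *ᵥ x = (Mᵀ *ᵥ x) ⬝ᵥ (Mᵀ *ᵥ x) := by
      rw [star_trivial, ← Matrix.mulVec_mulVec, Matrix.dotProduct_mulVec,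
        ← Matrix.mulVec_transpose]
    rw [hexp]
    obtain ⟨i, hi⟩ := Function.ne_iff.mp hy
    rw [dotProduct]
    apply Finset.sum_pos'
    · exact fun i _ => mul_self_nonneg _
    · refine ⟨i, Finset.mem_univ i, ?_⟩
      rcases lt_or_gt_of_ne hi with h | h
      · exact mul_pos_of_neg_of_neg h h
      · exact mul_pos h h

/-- QR-type decomposition: for every g ∈ GL there are l (lower triangular, with lower
triangular inverse) and k with orthogonal inverse such that l * g = k. -/
lemma exists_lower_orth (g : GL (Fin n) ℝ) :
    ∃ l k : GL (Fin n) ℝ,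
      (∀ i j : Fin n, i < j → (↑l : Matrix (Fin n) (Fin n) ℝ) i j = 0) ∧
      (∀ i j : Fin n, i < j → (↑l⁻¹ : Matrix (Fin n) (Fin n) ℝ) i j = 0) ∧
      IsOrth k⁻¹ ∧ l * g = k := by
  haveI : WellFoundedLT (Fin n) := inferInstance
  set M : Matrix (Fin n) (Fin n) ℝ := ↑g with hM
  have hMdet : IsUnit M.det := by
    rw [← Matrix.isUnit_iff_isUnit_det]
    exact g.isUnit
  have hS : (M * Mᵀ).PosDef := posDef_mul_transpose_self hMdet
  set Li : Matrix (Fin n) (Fin n) ℝ := LDL.lowerInv hS with hLi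
  haveI : Invertible Li := by
    convert LDL.invertibleLowerInv hS using 2
  have hLidet : IsUnit Li.det := Matrix.isUnit_det_of_invertible Li
  set d : Fin n → ℝ := LDL.diagEntries hS with hd
  have hDeq : Matrix.diagonal d = Li * (M * Mᵀ) * Liᵀ := by
    have h0 := LDL.diag_eq_lowerInv_conj hS
    rw [LDL.diag, Matrix.conjTranspose_eq_transpose_of_trivial] at h0
    ext i j
    have h1 := congrFun (congrFun h0 i) j
    by_cases hij : i = j
    · subst hij; simpa [Matrix.diagonal] using h1
    · simpa [Matrix.diagonal, hij] using h1
  set A : Matrix (Fin n) (Fin n) ℝ := Li * M with hA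
  have hAAT : A * Aᵀ = Matrix.diagonal d := by
    rw [hA, Matrix.transpose_mul, hDeq]
    noncomm_ring
  have hdnn : ∀ i, 0 ≤ d i := by
    intro i
    have : (A * Aᵀ) i i = d i := by rw [hAAT]; simp
    rw [← this, Matrix.mul_apply]
    exact Finset.sum_nonneg fun j _ => by
      rw [Matrix.transpose_apply]; exact mul_self_nonneg _
  have hAdet : IsUnit A.det := by
    rw [hA, Matrix.det_mul]
    exact hLidet.mul hMdet
  have hDdet : IsUnit (Matrix.diagonal d).det := by
    rw [← hAAT, Matrix.det_mul, Matrix.det_transpose]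
    exact hAdet.mul hAdet
  have hdne : ∀ i, d i ≠ 0 := by
    intro i
    have := hDdet
    rw [Matrix.det_diagonal, isUnit_iff_ne_zero] at this
    exact Finset.prod_ne_zero_iff.mp this i (Finset.mem_univ i)
  set e : Fin n → ℝ := fun i => Real.sqrt (d i) with he
  have hee : ∀ i, e i * e i = d i := fun i => Real.mul_self_sqrt (hdnn i)
  have hene : ∀ i, e i ≠ 0 := by
    intro i h
    apply hdne i
    rw [← hee i, h, mul_zero]
  set E : Matrix (Fin n) (Fin n) ℝ := Matrix.diagonal e with hE
  have hEE : E * E = Matrix.diagonal d := by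
    rw [hE, Matrix.diagonal_mul_diagonal]
    exact congrArg _ (funext hee)
  have hEdet : IsUnit E.det := by
    rw [hE, Matrix.det_diagonal, isUnit_iff_ne_zero]
    exact Finset.prod_ne_zero_iff.mpr fun i _ => hene i
  have hETr : Eᵀ = E := by rw [hE, Matrix.diagonal_transpose]
  set L : Matrix (Fin n) (Fin n) ℝ := Li⁻¹ * E with hL
  have hLdet : IsUnit L.det := by
    rw [hL, Matrix.det_mul]
    exact (Matrix.isUnit_nonsing_inv_det Li hLidet).mul hEdet
  have hLinv : L⁻¹ = E⁻¹ * Li := by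
    rw [hL, Matrix.mul_inv_rev, Matrix.nonsing_inv_nonsing_inv Li hLidet]
  -- triangularity
  have hbtLi : Matrix.BlockTriangular Li (OrderDual.toDual : Fin n → (Fin n)ᵒᵈ) := by
    intro i j hij
    exact LDL.lowerInv_triangular hS (by exact hij)
  have hbtL : Matrix.BlockTriangular L (OrderDual.toDual : Fin n → (Fin n)ᵒᵈ) := by
    rw [hL]
    exact (Matrix.blockTriangular_inv_of_blockTriangular hbtLi).mul
      (Matrix.blockTriangular_diagonal e)
  haveI : Invertible L := L.invertibleOfIsUnitDet hLdet
  have hbtLinv : Matrix.BlockTriangular L⁻¹ (OrderDual.toDual : Fin n → (Fin n)ᵒᵈ) :=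
    Matrix.blockTriangular_inv_of_blockTriangular hbtL
  -- the GL elements
  set lgl : GL (Fin n) ℝ := ⟨L⁻¹, L, Matrix.nonsing_inv_mul L hLdet,
    Matrix.mul_nonsing_inv L hLdet⟩ with hlgl
  refine ⟨lgl, lgl * g, ?_, ?_, ?_, rfl⟩
  · intro i j hij
    exact hbtLinv (show OrderDual.toDual j < OrderDual.toDual i from hij)
  · intro i j hij
    exact hbtL (show OrderDual.toDual j < OrderDual.toDual i from hij)
  · -- IsOrth (lgl * g)⁻¹
    have hK : (↑(lgl * g) : Matrix (Fin n) (Fin n) ℝ) = E⁻¹ * A := by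
      show L⁻¹ * M = E⁻¹ * A
      rw [hLinv, hA, Matrix.mul_assoc]
    set K : Matrix (Fin n) (Fin n) ℝ := E⁻¹ * A with hKdef
    have hKKT : K * Kᵀ = 1 := by
      rw [hKdef, Matrix.transpose_mul, Matrix.transpose_nonsing_inv, hETr]
      calc E⁻¹ * A * (Aᵀ * E⁻¹) = E⁻¹ * (A * Aᵀ) * E⁻¹ := by noncomm_ring
        _ = E⁻¹ * (E * E) * E⁻¹ := by rw [hAAT, hEE]
        _ = (E⁻¹ * E) * (E * E⁻¹) := by noncomm_ring
        _ = 1 := by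
            rw [Matrix.nonsing_inv_mul E hEdet, Matrix.mul_nonsing_inv E hEdet, one_mul]
    have hKinv : K⁻¹ = Kᵀ := Matrix.inv_eq_left_inv (mul_eq_one_comm.mp hKKT)
    show (↑(lgl * g)⁻¹ : Matrix (Fin n) (Fin n) ℝ)ᵀ * (↑(lgl * g)⁻¹ : Matrix (Fin n) (Fin n) ℝ) = 1
    rw [Matrix.coe_units_inv, hK, hKinv, Matrix.transpose_transpose, hKKT]

/-- **Proposition 2.13 (i).** Y_β^ss = S_β ∩ W_β; in particular S_β = O(n).Y_β^ss. -/
theorem Yss_eq_SS_inter_W {n : ℕ} (β : Matrix (Fin n) (Fin n) ℝ) (hβ : β ∈ Bset (n := n)) :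
    Yset β ∩ SS β = SS β ∩ Wset β ∧
    SS β = {μ | ∃ g : GL (Fin n) ℝ, IsOrth g ∧ ∃ lam ∈ Yset β ∩ SS β, μ = act g lam} := by
  constructor
  · ext μ
    exact ⟨fun h => ⟨h.2, h.1.1⟩, fun h => ⟨mem_Y_of_SS_W h.1 h.2, h.1⟩⟩
  · ext μ
    constructor
    · intro hμ
      obtain ⟨hne, hskew, ⟨g₀, hg₀⟩, hmax⟩ := id hμ
      obtain ⟨l, k, hl, hli, horth, hlg⟩ := exists_lower_orth g₀
      have hlamSS0 : act g₀ μ ∈ SS β := SS_act β hμ g₀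
      have hlamW0 : act g₀ μ ∈ Wset β :=
        ⟨act_skew g₀ hskew, W_of_betaMu (act_ne_zero g₀ hne) hg₀⟩
      have hlamW : act (l * g₀) μ ∈ Wset β := by
        rw [← act_mul]
        exact act_lower_W hβ.1.2 l hl hli hlamW0
      have hlamSS : act (l * g₀) μ ∈ SS β := SS_act β hμ (l * g₀)
      have hlamY : act (l * g₀) μ ∈ Yset β := mem_Y_of_SS_W hlamSS hlamW
      refine ⟨k⁻¹, horth, act (l * g₀) μ, ⟨hlamY, hlamSS⟩, ?_⟩
      rw [act_mul, hlg, inv_mul_cancel, act_one]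
    · rintro ⟨g, -, lam, ⟨-, hlamSS⟩, rfl⟩
      exact SS_act β hlamSS g

end
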